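/- arXiv:1209.6277 — 5 statements merged into one kernel-verified Lean document; each statement's English description precedes it below -/
import Mathlib

section
/- For any Boolean function f and relevant variable i, as(f) = (1/2)·as(f^{(i,+)}) + (1/2)·as(f^{(i,-)}) + (1/2)·(1 - ∑_{U ⊆ [n]} f̂^{(i,+)}(U)·f̂^{(i,-)}(U)). -/
open Finset

/-- Sign encoding of a Boolean value: `true ↦ 1`, `false ↦ -1`. -/
def bsign (a : Bool) : ℝ := if a then 1 else -1

/-- The character `χ_U(x) = ∏_{i ∈ U} x_i` (inputs encoded as Booleans). -/
def chi {n : ℕ} (U : Finset (Fin n)) (x : Fin n → Bool) : ℝ :=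
  ∏ i ∈ U, bsign (x i)

/-- Fourier coefficient `f̂(U) = 2^{-n} ∑_x f(x) χ_U(x)`. -/
noncomputable def fhat {n : ℕ} (f : (Fin n → Bool) → ℝ) (U : Finset (Fin n)) : ℝ :=
  (∑ x : Fin n → Bool, f x * chi U x) / 2 ^ n

/-- `f` is a (±1-valued) Boolean function. -/
def IsBoolean {n : ℕ} (f : (Fin n → Bool) → ℝ) : Prop := ∀ x, f x = 1 ∨ f x = -1

/-- Restriction `f^{(i,a)}` of `f` obtained by fixing the `i`-th input to `a`. -/
def restrict {n : ℕ} (f : (Fin n → Bool) → ℝ) (i : Fin n) (a : Bool) :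
    (Fin n → Bool) → ℝ :=
  fun x => f (Function.update x i a)

/-- Variable `i` is relevant for `f`. -/
def relevant {n : ℕ} (f : (Fin n → Bool) → ℝ) (i : Fin n) : Prop :=
  ∃ x, f x ≠ f (Function.update x i (!(x i)))

/-- Number of relevant variables of `f`. -/
noncomputable def numRel {n : ℕ} (f : (Fin n → Bool) → ℝ) : ℕ :=
  Nat.card {i : Fin n // relevant f i}

/-- Influence `I_i(f) = Pr[f(X) ≠ f(X ⊕ e_i)]` for uniform `X`. -/
noncomputable def influence {n : ℕ} (f : (Fin n → Bool) → ℝ) (i : Fin n) : ℝ :=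
  (Nat.card {x : Fin n → Bool // f x ≠ f (Function.update x i (!(x i)))} : ℝ) / 2 ^ n

/-- Average sensitivity `as(f) = ∑_i I_i(f)`. -/
noncomputable def avgSens {n : ℕ} (f : (Fin n → Bool) → ℝ) : ℝ :=
  ∑ i : Fin n, influence f i

/-- `IsNCFwith f L` : `f` is a nested canalizing function with the nested canalizing
structure recorded by the list `L` of triples `(π(j), α_j, β_j)`: fixing variable
`π(j)` to its canalizing value `α_j` forces the output `β_j`, and the restriction to
the non-canalizing value continues with the rest of the list; the base case is a
constant (±1) function. -/
inductive IsNCFwith : {n : ℕ} → ((Fin n → Bool) → ℝ) → List (Fin n × Bool × ℝ) → Prop where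
  | const {n : ℕ} (f : (Fin n → Bool) → ℝ) (b : ℝ) (hb : b = 1 ∨ b = -1)
      (h : ∀ x, f x = b) : IsNCFwith f []
  | step {n : ℕ} (f : (Fin n → Bool) → ℝ) (i : Fin n) (a : Bool) (b : ℝ)
      (hb : b = 1 ∨ b = -1) (L : List (Fin n × Bool × ℝ))
      (hrel : relevant f i)
      (hcan : ∀ x, x i = a → f x = b)
      (hrest : IsNCFwith (restrict f i (!a)) L) :
      IsNCFwith f ((i, a, b) :: L)

/-- `f` is a nested canalizing function. -/
def IsNCF {n : ℕ} (f : (Fin n → Bool) → ℝ) : Prop := ∃ L, IsNCFwith f L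

/-- Variable `i` is most dominant: some nested canalizing ordering starts with `i`. -/
def MostDominant {n : ℕ} (f : (Fin n → Bool) → ℝ) (i : Fin n) : Prop :=
  ∃ a b L, IsNCFwith f ((i, a, b) :: L)

/-- The canalized output values `β_1, β_2, …` recorded in `L` alternate in sign. -/
def AltBetas {n : ℕ} (L : List (Fin n × Bool × ℝ)) : Prop :=
  List.Chain' (fun p q : Fin n × Bool × ℝ => q.2.2 = -p.2.2) L

/-! Averaging over the cube is averaging over its two halves `x i = true` and `x i = false`.
For `j ≠ i` this makes `I_j(f)` the mean of `I_j(f^{(i,+)})` and `I_j(f^{(i,-)})`, while `i` is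
irrelevant for both restrictions. For `±1`-valued `f` the indicator of
`f^{(i,+)}(x) ≠ f^{(i,-)}(x)` is `(1 - f^{(i,+)}(x) f^{(i,-)}(x)) / 2`, so `I_i(f)` is
`(1 - ⟨f^{(i,+)}, f^{(i,-)}⟩) / 2`, and Plancherel writes this inner product as
`∑_U f̂^{(i,+)}(U) f̂^{(i,-)}(U)`. -/

section FlipSum
variable {ι M : Type*} [Fintype ι] [DecidableEq ι] [AddCommMonoid M]

theorem sum_update_not (G : (ι → Bool) → M) (i : ι) :
    ∑ x, G (Function.update x i !(x i)) = ∑ x, G x := by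
  have hinv : Function.Involutive fun x : ι → Bool => Function.update x i !(x i) := by
    intro x; simp
  exact Fintype.sum_bijective _ hinv.bijective (fun x => G (Function.update x i !(x i))) G
    fun _ => rfl

theorem sum_update_true_add_sum_update_false (G : (ι → Bool) → M) (i : ι) :
    ∑ x, G (Function.update x i true) + ∑ x, G (Function.update x i false)
      = 2 • ∑ x, G x := by
  have hpoint : ∀ x : ι → Bool, G (Function.update x i true) + G (Function.update x i false)
      = G x + G (Function.update x i !(x i)) := by
    intro x
    have hself : Function.update x i (x i) = x := Function.update_eq_self i x
    cases hx : x i <;> rw [hx] at hself <;> simp [hself, add_comm]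
  rw [← Finset.sum_add_distrib, Finset.sum_congr rfl fun x _ => hpoint x,
    Finset.sum_add_distrib, sum_update_not, two_nsmul]

end FlipSum

section Fourier
variable {n : ℕ}

theorem sum_chi_mul_chi (x y : Fin n → Bool) :
    ∑ U : Finset (Fin n), chi U x * chi U y = if x = y then 2 ^ n else 0 := by
  have hfactor : ∀ j, bsign (x j) * bsign (y j) + 1 = if x j = y j then 2 else 0 := by
    intro j; cases x j <;> cases y j <;> norm_num [bsign]
  calc ∑ U, chi U x * chi U y = ∏ j, (bsign (x j) * bsign (y j) + 1) := by
        simp [Finset.prod_add_one, chi, Finset.prod_mul_distrib]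
    _ = if x = y then 2 ^ n else 0 := by
        simp [hfactor, Finset.prod_ite_zero, funext_iff]

theorem sum_fhat_mul_fhat (g h : (Fin n → Bool) → ℝ) :
    ∑ U, fhat g U * fhat h U = (∑ x, g x * h x) / 2 ^ n := by
  calc ∑ U, fhat g U * fhat h U
      = (∑ x, ∑ y, g x * h y * ∑ U : Finset (Fin n), chi U x * chi U y) / (2 ^ n * 2 ^ n) := by
        simp only [fhat, div_mul_div_comm, Finset.sum_mul_sum, ← Finset.sum_div]
        congr 1
        rw [Finset.sum_comm]
        refine Finset.sum_congr rfl fun x _ => ?_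
        rw [Finset.sum_comm]
        simp only [Finset.mul_sum]
        refine Finset.sum_congr rfl fun y _ => Finset.sum_congr rfl fun U _ => by ring
    _ = (∑ x, g x * h x) / 2 ^ n := by
        simp only [sum_chi_mul_chi, mul_ite, mul_zero, Finset.sum_ite_eq, Finset.mem_univ,
          if_true, ← Finset.sum_mul]
        field_simp

end Fourier

section Influence
variable {n : ℕ}

theorem influence_eq_sum (g : (Fin n → Bool) → ℝ) (j : Fin n) :
    influence g j
      = (∑ x, if g x ≠ g (Function.update x j !(x j)) then 1 else 0) / 2 ^ n := by
  rw [influence, Finset.sum_boole, Nat.card_eq_fintype_card, Fintype.card_subtype]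

theorem influence_restrict_self (f : (Fin n → Bool) → ℝ) (i : Fin n) (a : Bool) :
    influence (restrict f i a) i = 0 := by
  simp [influence_eq_sum, _root_.restrict]

theorem influence_restrict_true_add_influence_restrict_false (f : (Fin n → Bool) → ℝ)
    {i j : Fin n} (hji : j ≠ i) :
    influence (restrict f i true) j + influence (restrict f i false) j = 2 * influence f j := by
  have hupdate : ∀ b (x : Fin n → Bool),
      (if f (Function.update x i b) ≠ f (Function.update (Function.update x i b) j
          !(Function.update x i b j)) then (1 : ℝ) else 0)
        = if restrict f i b x ≠ restrict f i b (Function.update x j !(x j)) then 1 else 0 := by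
    intro b x
    rw [Function.update_of_ne hji, Function.update_comm hji.symm]
    rfl
  have htwice := sum_update_true_add_sum_update_false
    (fun x => if f x ≠ f (Function.update x j !(x j)) then (1 : ℝ) else 0) i
  simp only [hupdate, nsmul_eq_mul, Nat.cast_ofNat] at htwice
  rw [influence_eq_sum, influence_eq_sum, influence_eq_sum, ← add_div, htwice, mul_div_assoc]

theorem influence_eq_of_isBoolean {f : (Fin n → Bool) → ℝ} (hf : IsBoolean f) (i : Fin n) :
    influence f i
      = (1 - (∑ x, restrict f i true x * restrict f i false x) / 2 ^ n) / 2 := by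
  have hpm : ∀ {a b : ℝ}, (a = 1 ∨ a = -1) → (b = 1 ∨ b = -1) →
      (if a ≠ b then 1 else 0) = (1 - a * b) / 2 := by
    rintro a b (rfl | rfl) (rfl | rfl) <;> norm_num
  have hupdate : ∀ b (x : Fin n → Bool),
      (if f (Function.update x i b) ≠ f (Function.update (Function.update x i b) i
          !(Function.update x i b i)) then (1 : ℝ) else 0)
        = (1 - restrict f i true x * restrict f i false x) / 2 := by
    intro b x
    rw [hpm (hf _) (hf _)]
    cases b <;> simp [_root_.restrict, mul_comm]
  have hsum : ∑ x, (if f x ≠ f (Function.update x i !(x i)) then (1 : ℝ) else 0)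
      = ∑ x, (1 - restrict f i true x * restrict f i false x) / 2 := by
    have htwice := sum_update_true_add_sum_update_false
      (fun x => if f x ≠ f (Function.update x i !(x i)) then (1 : ℝ) else 0) i
    simp only [hupdate, ← two_mul, nsmul_eq_mul, Nat.cast_ofNat] at htwice
    exact (mul_left_cancel₀ two_ne_zero htwice).symm
  have hcard : ∑ _x : Fin n → Bool, (1 : ℝ) = 2 ^ n := by simp
  rw [influence_eq_sum, hsum, ← Finset.sum_div, Finset.sum_sub_distrib, hcard]
  field_simp

end Influence

theorem avgSens_restrict_general {n : ℕ} (f : (Fin n → Bool) → ℝ) (hf : IsBoolean f)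
    (i : Fin n) :
    avgSens f = (1 / 2) * avgSens (restrict f i true)
      + (1 / 2) * avgSens (restrict f i false)
      + (1 / 2) * (1 - ∑ U : Finset (Fin n),
          fhat (restrict f i true) U * fhat (restrict f i false) U) := by
  have hsplit : ∀ g : (Fin n → Bool) → ℝ,
      avgSens g = influence g i + ∑ j ∈ univ.erase i, influence g j := fun g =>
    (Finset.add_sum_erase _ _ (Finset.mem_univ i)).symm
  have hothers : 2 * ∑ j ∈ univ.erase i, influence f j
      = ∑ j ∈ univ.erase i, influence (restrict f i true) j
        + ∑ j ∈ univ.erase i, influence (restrict f i false) j := by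
    rw [← Finset.sum_add_distrib, Finset.mul_sum]
    exact Finset.sum_congr rfl fun j hj =>
      (influence_restrict_true_add_influence_restrict_false f (Finset.ne_of_mem_erase hj)).symm
  rw [hsplit f, hsplit (restrict f i true), hsplit (restrict f i false),
    influence_restrict_self, influence_restrict_self, influence_eq_of_isBoolean hf,
    sum_fhat_mul_fhat]
  linarith

/-- Average sensitivity in terms of the two restrictions at a relevant variable. -/
theorem avgSens_restrict {n : ℕ} (f : (Fin n → Bool) → ℝ) (hf : IsBoolean f)
    (i : Fin n) (hi : relevant f i) :
    avgSens f = (1 / 2) * avgSens (restrict f i true)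
      + (1 / 2) * avgSens (restrict f i false)
      + (1 / 2) * (1 - ∑ U : Finset (Fin n),
          fhat (restrict f i true) U * fhat (restrict f i false) U) :=
  avgSens_restrict_general f hf i
end

section
/- For any nested canalizing function f with k > 1 relevant variables, the zero Fourier coefficient satisfies 1/2^{k-1} ≤ |f̂(∅)| ≤ 1 - 1/2^{k-1}. -/
open Finset

/-!
If `f` canalizes `x_i = a` to `b = ±1`, averaging over `x_i` first gives
`f̂(∅) = (b + ĝ(∅)) / 2`, where `g` is the restriction of `f` to `x_i = !a`: an NCF with one
relevant variable fewer. Induction on the number `k` of relevant variables then gives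
`|f̂(∅)| ≤ 1 - 2^(1-k)`; the base case `k = 1` holds because there `g` is constant, and equal
to `-b` since `x_i` is relevant, so `f̂(∅) = 0`. One more step, with the reverse triangle
inequality `|b + ĝ(∅)| ≥ 1 - |ĝ(∅)|`, gives the lower bound `2^(1-k)`.
-/

open Function

section Restriction

variable {n : ℕ} {f : (Fin n → Bool) → ℝ} {i j : Fin n} {a : Bool} {b : ℝ}

lemma restrict_apply_of_eq {x : Fin n → Bool} (hx : x i = a) : restrict f i a x = f x := by
  rw [_root_.restrict, ← hx, update_eq_self]

lemma not_relevant_restrict_self (f : (Fin n → Bool) → ℝ) (i : Fin n) (a : Bool) :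
    ¬ relevant (restrict f i a) i := by
  rintro ⟨x, hx⟩
  exact hx (by simp only [_root_.restrict, update_idem])

lemma not_relevant_of_forall_eq (hf : ∀ x, f x = b) (i : Fin n) : ¬ relevant f i :=
  fun ⟨x, hx⟩ => hx (by rw [hf, hf])

lemma relevant_of_relevant_restrict (hij : j ≠ i) (hj : relevant (restrict f i a) j) :
    relevant f j := by
  obtain ⟨x, hx⟩ := hj
  refine ⟨update x i a, ?_⟩
  rwa [update_of_ne hij, update_comm hij.symm]

lemma relevant_restrict_of_canalizing (hij : j ≠ i) (hcan : ∀ x, x i = a → f x = b)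
    (hj : relevant f j) : relevant (restrict f i (!a)) j := by
  obtain ⟨x, hx⟩ := hj
  have hxi : x i = !a := by
    refine (Bool.eq_or_eq_not (x i) a).resolve_left fun h => hx ?_
    rw [hcan x h, hcan _ (by rwa [update_of_ne hij.symm])]
  refine ⟨x, ?_⟩
  rwa [restrict_apply_of_eq hxi, restrict_apply_of_eq (by rwa [update_of_ne hij.symm])]

lemma numRel_eq_zero_of_forall_eq (hf : ∀ x, f x = b) : numRel f = 0 :=
  have : IsEmpty {i : Fin n // relevant f i} := ⟨fun ⟨i, hi⟩ => not_relevant_of_forall_eq hf i hi⟩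
  Nat.card_of_isEmpty

lemma numRel_eq_numRel_restrict_add_one (hrel : relevant f i)
    (hcan : ∀ x, x i = a → f x = b) : numRel f = numRel (restrict f i (!a)) + 1 := by
  have hset : {j | relevant f j} = insert i {j | relevant (restrict f i (!a)) j} := by
    ext j
    by_cases hji : j = i
    · subst hji
      simpa using hrel
    · simpa [hji] using
        ⟨relevant_restrict_of_canalizing hji hcan, relevant_of_relevant_restrict hji⟩
  have hi : i ∉ {j | relevant (restrict f i (!a)) j} := not_relevant_restrict_self f i (!a)
  change Nat.card {j | relevant f j} = Nat.card {j | relevant (restrict f i (!a)) j} + 1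
  rw [Nat.card_coe_set_eq, Nat.card_coe_set_eq, hset, Set.ncard_insert_of_notMem hi]

lemma forall_eq_of_canalizing (hcan : ∀ x, x i = a → f x = b)
    (hrest : ∀ x, restrict f i (!a) x = b) : ∀ x, f x = b := by
  intro x
  rcases Bool.eq_or_eq_not (x i) a with h | h
  · exact hcan x h
  · rw [← restrict_apply_of_eq (f := f) h, hrest]

end Restriction

section Fourier

variable {n : ℕ} {f : (Fin n → Bool) → ℝ} {i : Fin n} {a : Bool} {b : ℝ}

lemma fhat_empty (f : (Fin n → Bool) → ℝ) : fhat f ∅ = (∑ x, f x) / 2 ^ n := by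
  simp [fhat, chi]

lemma fhat_empty_of_forall_eq (hf : ∀ x, f x = b) : fhat f ∅ = b := by
  simp [fhat_empty, hf]

lemma fhat_empty_eq_average_restrict (f : (Fin n → Bool) → ℝ) (i : Fin n) (a : Bool) :
    fhat f ∅ = (fhat (restrict f i a) ∅ + fhat (restrict f i (!a)) ∅) / 2 := by
  have hflip : (∑ x : Fin n → Bool, f (update x i (!x i))) = ∑ x, f x := by
    refine (Involutive.bijective fun x => ?_).sum_comp f
    simp
  have hpair : ∀ x : Fin n → Bool,
      restrict f i a x + restrict f i (!a) x = f x + f (update x i (!x i)) := by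
    intro x
    rcases Bool.eq_or_eq_not a (x i) with rfl | rfl <;> simp [_root_.restrict, add_comm]
  rw [fhat_empty, fhat_empty, fhat_empty, ← add_div, ← sum_add_distrib,
    sum_congr rfl fun x _ => hpair x, sum_add_distrib, hflip]
  ring

lemma fhat_empty_of_canalizing (hcan : ∀ x, x i = a → f x = b) :
    fhat f ∅ = (b + fhat (restrict f i (!a)) ∅) / 2 := by
  rw [fhat_empty_eq_average_restrict f i a,
    fhat_empty_of_forall_eq (f := restrict f i a) fun x => hcan _ (update_self i a x)]

end Fourier

section Averaging

variable {b c t : ℝ}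

lemma abs_add_div_two_le (hb : |b| = 1) (hc : |c| ≤ 1 - t) : |(b + c) / 2| ≤ 1 - t / 2 := by
  rw [abs_div, abs_two]
  linarith [abs_add_le b c]

lemma le_abs_add_div_two (hb : |b| = 1) (hc : |c| ≤ 1 - t) : t / 2 ≤ |(b + c) / 2| := by
  rw [abs_div, abs_two]
  linarith [abs_sub_abs_le_abs_add b c]

end Averaging

lemma one_div_two_pow_succ (k : ℕ) : (1 : ℝ) / 2 ^ (k + 1) = 1 / 2 ^ k / 2 := by
  rw [pow_succ, div_mul_eq_div_div]

namespace IsNCFwith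

variable {n : ℕ} {f : (Fin n → Bool) → ℝ} {L : List (Fin n × Bool × ℝ)}

lemma exists_forall_eq_of_numRel_eq_zero (h : IsNCFwith f L) (h0 : numRel f = 0) :
    ∃ b, (b = 1 ∨ b = -1) ∧ ∀ x, f x = b := by
  cases h with
  | const _ b hb hf => exact ⟨b, hb, hf⟩
  | step _ i _ _ _ _ hrel =>
    have : Nonempty {j // relevant f j} := ⟨⟨i, hrel⟩⟩
    exact absurd h0 Nat.card_pos.ne'

theorem abs_fhat_empty_le (h : IsNCFwith f L) {k : ℕ} (hk : numRel f = k + 1) :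
    |fhat f ∅| ≤ 1 - 1 / 2 ^ k := by
  induction h generalizing k with
  | const f b _ hf => simp [numRel_eq_zero_of_forall_eq hf] at hk
  | step f i a b hb _ hrel hcan hrest ih =>
    have hrest_k : numRel (restrict f i (!a)) = k := by
      have := numRel_eq_numRel_restrict_add_one hrel hcan
      omega
    rw [fhat_empty_of_canalizing hcan]
    cases k with
    | zero =>
      obtain ⟨b', hb', hrest_eq⟩ := hrest.exists_forall_eq_of_numRel_eq_zero hrest_k
      have hne : b' ≠ b := fun he =>
        not_relevant_of_forall_eq (forall_eq_of_canalizing hcan (he ▸ hrest_eq)) i hrel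
      have hsum : b + b' = 0 := by grind
      simp [fhat_empty_of_forall_eq hrest_eq, hsum]
    | succ k =>
      rw [one_div_two_pow_succ]
      exact abs_add_div_two_le ((abs_eq zero_le_one).2 hb) (ih hrest_k)

end IsNCFwith

/-- Bounds on the zero coefficient of an NCF with `k > 1` relevant variables. -/
theorem fhat_empty_ncf_bounds {n : ℕ} (f : (Fin n → Bool) → ℝ)
    (hf : IsNCF f) (k : ℕ) (hk : numRel f = k) (h1 : 1 < k) :
    1 / 2 ^ (k - 1) ≤ |fhat f ∅| ∧ |fhat f ∅| ≤ 1 - 1 / 2 ^ (k - 1) := by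
  obtain ⟨L, h⟩ := hf
  obtain ⟨m, rfl⟩ : ∃ m, k = m + 2 := ⟨k - 2, by omega⟩
  rw [show m + 2 - 1 = m + 1 by omega]
  refine ⟨?_, h.abs_fhat_empty_le hk⟩
  cases h with
  | const _ _ _ hf => simp [numRel_eq_zero_of_forall_eq hf] at hk
  | step _ i a b hb _ hrel hcan hrest =>
    have hrest_k : numRel (restrict f i (!a)) = m + 1 := by
      have := numRel_eq_numRel_restrict_add_one hrel hcan
      omega
    rw [fhat_empty_of_canalizing hcan, one_div_two_pow_succ]
    exact le_abs_add_div_two ((abs_eq zero_le_one).2 hb)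
      (hrest.abs_fhat_empty_le hrest_k)
end

section
/- If f is a nested canalizing function with k relevant variables in which every relevant variable is most dominant, then as(f) = k/2^{k-1}, achieving the lower bound on the average sensitivity of NCFs. -/
open Finset

lemma irrel_update {n : ℕ} (f : (Fin n → Bool) → ℝ) {i : Fin n}
    (hi : ¬ relevant f i) (x : Fin n → Bool) (v : Bool) :
    f (Function.update x i v) = f x := by
  have h : ∀ y, f y = f (Function.update y i (!(y i))) := by
    intro y; by_contra hy; exact hi ⟨y, hy⟩
  by_cases hv : v = x i
  · rw [hv, Function.update_eq_self]
  · have : v = !(x i) := Bool.eq_not_iff.mpr hv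
    rw [this]; exact (h x).symm

lemma agree_aux {n : ℕ} (f : (Fin n → Bool) → ℝ) :
    ∀ m (x y : Fin n → Bool),
      (univ.filter fun j => x j ≠ y j).card = m →
      (∀ j, relevant f j → x j = y j) → f x = f y := by
  intro m
  induction m with
  | zero =>
    intro x y hc _
    have : x = y := by
      funext j
      by_contra h
      have hj : j ∈ univ.filter fun j => x j ≠ y j := by simp [h]
      rw [Finset.card_eq_zero] at hc
      simp [hc] at hj
    rw [this]
  | succ m ih =>
    intro x y hc hrel
    have hne : (univ.filter fun j => x j ≠ y j).Nonempty :=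
      Finset.card_pos.mp (by omega)
    obtain ⟨i, hi⟩ := hne
    have hxy : x i ≠ y i := (Finset.mem_filter.mp hi).2
    have hirr : ¬ relevant f i := fun h => hxy (hrel i h)
    have h1 : f (Function.update y i (x i)) = f y := irrel_update f hirr y (x i)
    have hset : (univ.filter fun j => x j ≠ Function.update y i (x i) j)
        = (univ.filter fun j => x j ≠ y j).erase i := by
      ext j
      simp only [Finset.mem_filter, Finset.mem_erase, Finset.mem_univ, true_and]
      by_cases hji : j = i
      · subst hji; simp [Function.update_self]
      · rw [Function.update_of_ne hji]; tauto
    have h2 : f x = f (Function.update y i (x i)) := by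
      apply ih
      · rw [hset, Finset.card_erase_of_mem hi, hc]; omega
      · intro j hj
        by_cases hji : j = i
        · subst hji; simp [Function.update_self]
        · rw [Function.update_of_ne hji]; exact hrel j hj
    rw [h2, h1]

lemma eq_of_agree_on_relevant {n : ℕ} (f : (Fin n → Bool) → ℝ) (x y : Fin n → Bool)
    (h : ∀ j, relevant f j → x j = y j) : f x = f y :=
  agree_aux f _ x y rfl h

lemma card_fixed_on {n : ℕ} (s : Finset (Fin n)) (t : Fin n → Bool) :
    Nat.card {x : Fin n → Bool // ∀ j ∈ s, x j = t j} = 2 ^ (n - s.card) := by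
  classical
  have e : {x : Fin n → Bool // ∀ j ∈ s, x j = t j} ≃ ({j : Fin n // j ∉ s} → Bool) :=
    { toFun := fun x j => x.1 j.1
      invFun := fun y => ⟨fun j => if h : j ∈ s then t j else y ⟨j, h⟩,
        fun j hj => dif_pos hj⟩
      left_inv := fun x => Subtype.ext (funext fun j => by
        by_cases h : j ∈ s
        · simp [h, x.2 j h]
        · simp [h])
      right_inv := fun y => funext fun j => by simp [j.2] }
  rw [Nat.card_congr e]
  simp only [Nat.card_eq_fintype_card, Fintype.card_fun, Fintype.card_bool]
  congr 1
  have : Fintype.card {j : Fin n // j ∉ s} = n - Fintype.card {j : Fin n // j ∈ s} := by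
    simpa using Fintype.card_subtype_compl (fun j : Fin n => j ∈ s)
  rw [this]
  congr 1
  simp [Fintype.card_subtype]


/-- An NCF all of whose relevant variables are most dominant attains the lower bound. -/
theorem avgSens_ncf_all_most_dominant {n : ℕ} (f : (Fin n → Bool) → ℝ)
    (hf : IsNCF f) (hdom : ∀ i, relevant f i → MostDominant f i)
    (k : ℕ) (hk : numRel f = k) :
    avgSens f = (k : ℝ) / 2 ^ (k - 1) := by
  classical
  -- extract canalizing data for each relevant variable
  have hgex : ∀ i : Fin n, ∃ p : Bool × ℝ, relevant f i → ∀ x, x i = p.1 → f x = p.2 := by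
    intro i
    by_cases hi : relevant f i
    · obtain ⟨a, b, L, hL⟩ := hdom i hi
      cases hL with
      | step _ _ _ _ hb _ hrel hcan hrest => exact ⟨(a, b), fun _ => hcan⟩
    · exact ⟨(true, 1), fun h => absurd h hi⟩
  choose g hg using hgex
  set a : Fin n → Bool := fun i => (g i).1 with ha
  set x₀ : Fin n → Bool := fun j => !(a j) with hx₀
  set c : ℝ := f x₀ with hc
  set R : Finset (Fin n) := univ.filter (fun i => relevant f i) with hR
  have hkR : R.card = k := by
    rw [← hk]
    simp [numRel, Nat.card_eq_fintype_card, Fintype.card_subtype, hR]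
  have hkn : k ≤ n := by
    rw [← hkR]
    exact (Finset.card_filter_le _ _).trans (by simp)
  -- constancy on the all-noncanalizing pattern
  have hS : ∀ x, (∀ j, relevant f j → x j = !(a j)) → f x = c := by
    intro x hx
    exact eq_of_agree_on_relevant f x x₀ (fun j hj => hx j hj)
  -- if flipping i changes f, all other relevant coordinates are non-canalizing
  have hall : ∀ (i : Fin n) (x : Fin n → Bool),
      f x ≠ f (Function.update x i (!(x i))) →
      ∀ j, relevant f j → j ≠ i → x j = !(a j) := by
    intro i x hx j hj hji
    by_contra h
    have hxa : x j = a j := by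
      rcases Bool.eq_or_eq_not (x j) (a j) with h' | h'
      · exact h'
      · exact absurd h' h
    have h1 : f x = (g j).2 := hg j hj x hxa
    have h2 : f (Function.update x i (!(x i))) = (g j).2 := by
      apply hg j hj
      rw [Function.update_of_ne hji]; exact hxa
    exact hx (h1.trans h2.symm)
  -- the canalized value differs from c
  have hbc : ∀ i, relevant f i → (g i).2 ≠ c := by
    intro i hi
    obtain ⟨x, hx⟩ := hi.imp (fun _ h => h)
    have h2 := hall i x hx
    by_cases hxi : x i = a i
    · have hv1 : f x = (g i).2 := hg i ‹relevant f i› x hxi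
      have hv2 : f (Function.update x i (!(x i))) = c := by
        apply hS
        intro j hj
        by_cases hji : j = i
        · subst hji; rw [Function.update_self, hxi]
        · rw [Function.update_of_ne hji]; exact h2 j hj hji
      intro heq; exact hx (by rw [hv1, hv2, heq])
    · have hxi' : x i = !(a i) := by
        rcases Bool.eq_or_eq_not (x i) (a i) with h' | h'
        · exact absurd h' hxi
        · exact h'
      have hv1 : f x = c := by
        apply hS
        intro j hj
        by_cases hji : j = i
        · subst hji; exact hxi'
        · exact h2 j hj hji
      have hv2 : f (Function.update x i (!(x i))) = (g i).2 := by
        apply hg i ‹relevant f i›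
        rw [Function.update_self, hxi', Bool.not_not]
      intro heq; exact hx (by rw [hv1, hv2, heq])
  -- characterization of the sensitive inputs for a relevant variable
  have hchar : ∀ i, relevant f i → ∀ x : Fin n → Bool,
      (f x ≠ f (Function.update x i (!(x i)))) ↔ (∀ j ∈ R.erase i, x j = x₀ j) := by
    intro i hi x
    constructor
    · intro hx j hj
      rw [Finset.mem_erase, hR, Finset.mem_filter] at hj
      exact hall i x hx j hj.2.2 hj.1
    · intro hx
      have h2 : ∀ j, relevant f j → j ≠ i → x j = !(a j) := by
        intro j hj hji
        exact hx j (by rw [Finset.mem_erase, hR, Finset.mem_filter]; exact ⟨hji, by simp, hj⟩)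
      by_cases hxi : x i = a i
      · have hv1 : f x = (g i).2 := hg i hi x hxi
        have hv2 : f (Function.update x i (!(x i))) = c := by
          apply hS
          intro j hj
          by_cases hji : j = i
          · subst hji; rw [Function.update_self, hxi]
          · rw [Function.update_of_ne hji]; exact h2 j hj hji
        rw [hv1, hv2]; exact hbc i hi
      · have hxi' : x i = !(a i) := by
          rcases Bool.eq_or_eq_not (x i) (a i) with h' | h'
          · exact absurd h' hxi
          · exact h'
        have hv1 : f x = c := by
          apply hS
          intro j hj
          by_cases hji : j = i
          · subst hji; exact hxi'
          · exact h2 j hj hji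
        have hv2 : f (Function.update x i (!(x i))) = (g i).2 := by
          apply hg i hi
          rw [Function.update_self, hxi', Bool.not_not]
        rw [hv1, hv2]; exact fun h => hbc i hi h.symm
  -- influence of a relevant variable
  have hinfl : ∀ i, relevant f i → influence f i = 2 ^ (n - (k - 1)) / 2 ^ n := by
    intro i hi
    have hcard : Nat.card {x : Fin n → Bool // f x ≠ f (Function.update x i (!(x i)))}
        = 2 ^ (n - (k - 1)) := by
      rw [Nat.card_congr (Equiv.subtypeEquivRight (hchar i hi))]
      rw [card_fixed_on (R.erase i) x₀]
      congr 1
      rw [Finset.card_erase_of_mem (by rw [hR, Finset.mem_filter]; exact ⟨by simp, hi⟩), hkR]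
    rw [influence, hcard]
    push_cast
    ring
  -- influence of an irrelevant variable is 0
  have hinfl0 : ∀ i, ¬ relevant f i → influence f i = 0 := by
    intro i hi
    have : IsEmpty {x : Fin n → Bool // f x ≠ f (Function.update x i (!(x i)))} := by
      constructor
      rintro ⟨x, hx⟩
      exact hx (by rw [irrel_update f hi x (!(x i))])
    rw [influence, Nat.card_of_isEmpty]
    simp
  -- sum up
  have hsum : avgSens f = ∑ i ∈ R, influence f i := by
    rw [avgSens]
    refine (Finset.sum_subset (Finset.subset_univ R) ?_).symm
    intro i _ hiR
    apply hinfl0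
    intro h
    exact hiR (by rw [hR, Finset.mem_filter]; exact ⟨by simp, h⟩)
  rw [hsum]
  have : ∑ i ∈ R, influence f i = ∑ i ∈ R, ((2 : ℝ) ^ (n - (k - 1)) / 2 ^ n) := by
    apply Finset.sum_congr rfl
    intro i hiR
    exact hinfl i ((Finset.mem_filter.mp (hR ▸ hiR)).2)
  rw [this, Finset.sum_const, hkR, nsmul_eq_mul]
  -- arithmetic
  have hpow : (2 : ℝ) ^ (n - (k - 1)) * 2 ^ (k - 1) = 2 ^ n := by
    rw [← pow_add]
    congr 1
    omega
  have h1 : (2 : ℝ) ^ n ≠ 0 := by positivity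
  have h2 : (2 : ℝ) ^ (k - 1) ≠ 0 := by positivity
  field_simp
  linear_combination (k : ℝ) * hpow
end

section
/- If f is a nested canalizing function with k relevant variables and alternating canalized values β, then as(f) = 4/3 - 2^{-k} - (1/3)·2^{-k}·(-1)^k, achieving the upper bound on the average sensitivity of NCFs. -/
open Finset

namespace AuxNCF
variable {n : ℕ}

lemma restrict_update (f : (Fin n → Bool) → ℝ) (i : Fin n) (a c : Bool) (x : Fin n → Bool) :
    restrict f i a (Function.update x i c) = restrict f i a x := by
  simp [_root_.restrict, Function.update_idem]

lemma not_relevant_restrict (f : (Fin n → Bool) → ℝ) (i : Fin n) (a : Bool) :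
    ¬ relevant (restrict f i a) i := by
  rintro ⟨x, hx⟩
  exact hx (restrict_update f i a _ x).symm

lemma f_eq_restrict (f : (Fin n → Bool) → ℝ) (i : Fin n) (a : Bool) (x : Fin n → Bool)
    (h : x i = !a) : f x = restrict f i (!a) x := by
  rw [_root_.restrict, ← h, Function.update_eq_self]

lemma bool_eq_not {c a : Bool} (h : c ≠ a) : c = !a := by cases c <;> cases a <;> simp_all

lemma relevant_of_restrict {f : (Fin n → Bool) → ℝ} {i : Fin n} {a : Bool} {j : Fin n}
    (h : relevant (restrict f i a) j) : j ≠ i ∧ relevant f j := by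
  have hji : j ≠ i := by rintro rfl; exact not_relevant_restrict _ _ _ h
  obtain ⟨x, hx⟩ := h
  refine ⟨hji, ⟨Function.update x i a, fun hc => hx ?_⟩⟩
  have h1 : (Function.update x i a) j = x j := Function.update_of_ne hji _ _
  rw [h1] at hc
  rw [_root_.restrict, _root_.restrict, Function.update_comm hji]
  exact hc

lemma ncf_boolean {f : (Fin n → Bool) → ℝ} {L} (h : IsNCFwith f L) : IsBoolean f := by
  induction h with
  | const f b hb hc => intro x; rw [hc]; exact hb
  | step f i a b hb L hrel hcan hrest ih =>
    intro x
    by_cases hxa : x i = a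
    · rw [hcan x hxa]; exact hb
    · rw [f_eq_restrict f i a x (bool_eq_not hxa)]; exact ih _

lemma ncf_irrel {f : (Fin n → Bool) → ℝ} {L} (h : IsNCFwith f L) :
    ∀ j, j ∉ L.map Prod.fst → ∀ x c, f (Function.update x j c) = f x := by
  induction h with
  | const f b hb hc => intro j hj x c; rw [hc, hc]
  | step f i a b hb L hrel hcan hrest ih =>
    intro j hj x c
    simp only [List.map_cons, List.mem_cons, not_or] at hj
    obtain ⟨hji, hjL⟩ := hj
    have hupd : (Function.update x j c) i = x i :=
      Function.update_of_ne (Ne.symm hji) _ _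
    by_cases hxa : x i = a
    · rw [hcan x hxa, hcan _ (by rw [hupd]; exact hxa)]
    · have hx : x i = !a := bool_eq_not hxa
      rw [f_eq_restrict f i a x hx, f_eq_restrict f i a _ (by rw [hupd]; exact hx)]
      exact ih j hjL x c

lemma relevant_mem {f : (Fin n → Bool) → ℝ} {L} (h : IsNCFwith f L) {j} (hj : relevant f j) :
    j ∈ L.map Prod.fst := by
  by_contra hm
  obtain ⟨x, hx⟩ := hj
  exact hx (ncf_irrel h j hm x _).symm

lemma mem_relevant {f : (Fin n → Bool) → ℝ} {L} (h : IsNCFwith f L) :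
    ∀ j ∈ L.map Prod.fst, relevant f j := by
  induction h with
  | const => simp
  | step f i a b hb L hrel hcan hrest ih =>
    intro j hj
    simp only [List.map_cons, List.mem_cons] at hj
    rcases hj with rfl | hj
    · exact hrel
    · exact (relevant_of_restrict (ih j hj)).2

lemma ncf_nodup {f : (Fin n → Bool) → ℝ} {L} (h : IsNCFwith f L) : (L.map Prod.fst).Nodup := by
  induction h with
  | const => simp
  | step f i a b hb L hrel hcan hrest ih =>
    simp only [List.map_cons, List.nodup_cons]
    exact ⟨fun hmem => not_relevant_restrict f i (!a) (mem_relevant hrest i hmem), ih⟩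

lemma ncf_numRel {f : (Fin n → Bool) → ℝ} {L} (h : IsNCFwith f L) : numRel f = L.length := by
  classical
  have he : ∀ j, relevant f j ↔ j ∈ L.map Prod.fst :=
    fun j => ⟨relevant_mem h, mem_relevant h j⟩
  have he2 : ∀ j : Fin n, j ∈ L.map Prod.fst ↔ j ∈ (L.map Prod.fst).toFinset := by simp
  rw [numRel, Nat.card_congr (Equiv.subtypeEquivRight he),
    Nat.card_congr (Equiv.subtypeEquivRight he2), Nat.card_eq_fintype_card, Fintype.card_coe,
    List.toFinset_card_of_nodup (ncf_nodup h), List.length_map]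

lemma natCard_eq_filter (p : (Fin n → Bool) → Prop) [DecidablePred p] :
    Nat.card {x // p x} = (univ.filter p).card := by
  rw [Nat.card_eq_fintype_card, Fintype.card_subtype]

lemma card_split (p : (Fin n → Bool) → Prop) (i : Fin n) (a : Bool) :
    Nat.card {x // p x} = Nat.card {x // x i = a ∧ p x} + Nat.card {x // x i = !a ∧ p x} := by
  classical
  rw [natCard_eq_filter, natCard_eq_filter, natCard_eq_filter]
  have h1 : univ.filter (fun x : Fin n → Bool => p x) =
      (univ.filter fun x => x i = a ∧ p x) ∪ (univ.filter fun x => x i = !a ∧ p x) := by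
    ext x
    simp only [mem_union, mem_filter, mem_univ, true_and]
    constructor
    · intro hpx
      by_cases hx : x i = a
      · exact Or.inl ⟨hx, hpx⟩
      · exact Or.inr ⟨bool_eq_not hx, hpx⟩
    · rintro (⟨_, hpx⟩ | ⟨_, hpx⟩) <;> exact hpx
  have h2 : Disjoint (univ.filter fun x : Fin n → Bool => x i = a ∧ p x)
      (univ.filter fun x => x i = !a ∧ p x) := by
    rw [Finset.disjoint_left]
    intro x hx1 hx2
    simp only [mem_filter, mem_univ, true_and] at hx1 hx2
    rw [hx1.1] at hx2
    exact absurd hx2.1 (by cases a <;> simp)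
  rw [h1, Finset.card_union_of_disjoint h2]

lemma half_card {p : (Fin n → Bool) → Prop} {i : Fin n}
    (hp : ∀ x c, p (Function.update x i c) ↔ p x) (a : Bool) :
    2 * Nat.card {x // x i = a ∧ p x} = Nat.card {x // p x} := by
  have e : {x : Fin n → Bool // x i = a ∧ p x} ≃ {x : Fin n → Bool // x i = !a ∧ p x} :=
    { toFun := fun x => ⟨Function.update x.1 i (!a),
        Function.update_self _ _ _, (hp _ _).mpr x.2.2⟩
      invFun := fun x => ⟨Function.update x.1 i a,
        Function.update_self _ _ _, (hp _ _).mpr x.2.2⟩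
      left_inv := fun x => Subtype.ext (by
        show Function.update (Function.update x.1 i (!a)) i a = x.1
        rw [Function.update_idem]
        exact Function.update_eq_self_iff.mpr x.2.1.symm)
      right_inv := fun x => Subtype.ext (by
        show Function.update (Function.update x.1 i a) i (!a) = x.1
        rw [Function.update_idem]
        exact Function.update_eq_self_iff.mpr x.2.1.symm) }
  rw [card_split p i a, two_mul]
  nth_rewrite 2 [Nat.card_congr e]
  rfl

lemma half_card_coord (i : Fin n) (a : Bool) :
    2 * Nat.card {x : Fin n → Bool // x i = a} = 2 ^ n := by
  classical
  have e : {x : Fin n → Bool // x i = a} ≃ {x : Fin n → Bool // x i = !a} :=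
    { toFun := fun x => ⟨Function.update x.1 i (!a), Function.update_self _ _ _⟩
      invFun := fun x => ⟨Function.update x.1 i a, Function.update_self _ _ _⟩
      left_inv := fun x => Subtype.ext (by
        show Function.update (Function.update x.1 i (!a)) i a = x.1
        rw [Function.update_idem]
        exact Function.update_eq_self_iff.mpr x.2.symm)
      right_inv := fun x => Subtype.ext (by
        show Function.update (Function.update x.1 i a) i (!a) = x.1
        rw [Function.update_idem]
        exact Function.update_eq_self_iff.mpr x.2.symm) }
  have hsplit : Nat.card {x : Fin n → Bool // x i = a} +
      Nat.card {x : Fin n → Bool // x i = !a} = 2 ^ n := by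
    rw [natCard_eq_filter, natCard_eq_filter]
    have hcompl : (univ.filter fun x : Fin n → Bool => x i = !a) =
        univ.filter (fun x : Fin n → Bool => ¬ x i = a) := by
      ext x
      simp only [mem_filter, mem_univ, true_and]
      cases a <;> cases hx : x i <;> simp
    rw [hcompl, card_filter_add_card_filter_not, card_univ]
    simp
  rw [two_mul]
  nth_rewrite 2 [Nat.card_congr e]
  exact hsplit

lemma ncf_count_step {f : (Fin n → Bool) → ℝ} {i : Fin n} {a : Bool} {b : ℝ}
    {L : List (Fin n × Bool × ℝ)} (h : IsNCFwith f ((i, a, b) :: L)) (c : ℝ) :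
    2 * Nat.card {x // f x = c} =
      (if c = b then 2 ^ n else 0) + Nat.card {x // restrict f i (!a) x = c} := by
  cases h with
  | step _ _ _ _ hb _ hrel hcan hrest =>
    have h1 : 2 * Nat.card {x : Fin n → Bool // x i = a ∧ f x = c} =
        if c = b then 2 ^ n else 0 := by
      by_cases hc : c = b
      · rw [if_pos hc]
        have hiff : ∀ x : Fin n → Bool, (x i = a ∧ f x = c) ↔ (x i = a) :=
          fun x => ⟨fun h => h.1, fun h => ⟨h, by rw [hcan x h, hc]⟩⟩
        rw [Nat.card_congr (Equiv.subtypeEquivRight hiff)]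
        exact half_card_coord i a
      · rw [if_neg hc]
        have : IsEmpty {x : Fin n → Bool // x i = a ∧ f x = c} :=
          ⟨fun ⟨x, hx⟩ => hc (hx.2.symm.trans (hcan x hx.1))⟩
        rw [Nat.card_of_isEmpty]
    have h2 : 2 * Nat.card {x : Fin n → Bool // x i = !a ∧ f x = c} =
        Nat.card {x : Fin n → Bool // restrict f i (!a) x = c} := by
      have hiff : ∀ x : Fin n → Bool,
          (x i = !a ∧ f x = c) ↔ (x i = !a ∧ restrict f i (!a) x = c) :=
        fun x => and_congr_right fun hx => by rw [← f_eq_restrict f i a x hx]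
      rw [Nat.card_congr (Equiv.subtypeEquivRight hiff)]
      exact half_card (fun x c' => by rw [restrict_update]) (!a)
    rw [card_split (fun x => f x = c) i a, Nat.mul_add, h1, h2]

lemma bool_card_compl {f : (Fin n → Bool) → ℝ} (hf : IsBoolean f) {c : ℝ}
    (hc : c = 1 ∨ c = -1) :
    Nat.card {x // f x = c} + Nat.card {x // f x = -c} = 2 ^ n := by
  classical
  rw [natCard_eq_filter, natCard_eq_filter]
  have hcompl : (univ.filter fun x : Fin n → Bool => f x = -c) =
      univ.filter (fun x => ¬ f x = c) := by
    ext x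
    simp only [mem_filter, mem_univ, true_and]
    rcases hf x with h | h <;> rcases hc with rfl | rfl <;> rw [h] <;> norm_num
  rw [hcompl, card_filter_add_card_filter_not, card_univ]
  simp

lemma ncf_base_ne {f : (Fin n → Bool) → ℝ} {i : Fin n} {a : Bool} {β : ℝ}
    (hrel : relevant f i) (hcan : ∀ x, x i = a → f x = β) {b : ℝ}
    (hconst : ∀ x, restrict f i (!a) x = b) : β ≠ b := by
  obtain ⟨x, hx⟩ := hrel
  by_cases hxa : x i = a
  · have h1 : f x = β := hcan x hxa
    have h2 : f (Function.update x i (!(x i))) = b := by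
      rw [hxa]; exact hconst x
    intro he; exact hx (by rw [h1, h2, he])
  · have hxna : x i = !a := bool_eq_not hxa
    have h1 : f x = b := by rw [f_eq_restrict f i a x hxna]; exact hconst x
    have h2 : f (Function.update x i (!(x i))) = β := by
      apply hcan
      rw [Function.update_self, hxna, Bool.not_not]
    intro he; exact hx (by rw [h1, h2, he])

lemma ncf_count_alt : ∀ (L : List (Fin n × Bool × ℝ)) (f : (Fin n → Bool) → ℝ) (i : Fin n)
    (a : Bool) (β : ℝ), IsNCFwith f ((i, a, β) :: L) → AltBetas ((i, a, β) :: L) →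
    (Nat.card {x // f x = β} : ℝ) = (2/3 + (1/3) * (-1/2 : ℝ) ^ (L.length + 1)) * 2 ^ n := by
  intro L
  induction L with
  | nil =>
    intro f i a β h halt
    have hcount := ncf_count_step h β
    cases h with
    | step _ _ _ _ hb _ hrel hcan hrest =>
      cases hrest with
      | const _ b hb' hconst =>
        have hne : β ≠ b := ncf_base_ne hrel hcan hconst
        have hz : Nat.card {x : Fin n → Bool // restrict f i (!a) x = β} = 0 := by
          have : IsEmpty {x : Fin n → Bool // restrict f i (!a) x = β} :=
            ⟨fun ⟨x, hx⟩ => hne (hx.symm.trans (hconst x))⟩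
          rw [Nat.card_of_isEmpty]
        rw [if_pos rfl, hz, Nat.add_zero] at hcount
        have hc : (2 : ℝ) * Nat.card {x : Fin n → Bool // f x = β} = 2 ^ n := by
          exact_mod_cast hcount
        simp only [List.length_nil, pow_one]
        linarith
  | cons hd L'' ih =>
    intro f i a β h halt
    obtain ⟨i₂, a₂, β₂⟩ := hd
    have hcount := ncf_count_step h β
    cases h with
    | step _ _ _ _ hb _ hrel hcan hrest =>
      have hβ₂ : β₂ = -β := by simpa using (List.isChain_cons_cons.mp halt).1
      have halt' : AltBetas ((i₂, a₂, β₂) :: L'') := (List.isChain_cons_cons.mp halt).2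
      have ihg := ih (restrict f i (!a)) i₂ a₂ β₂ hrest halt'
      have hbool : IsBoolean (restrict f i (!a)) := ncf_boolean hrest
      have hβ2pm : β₂ = 1 ∨ β₂ = -1 := by
        rcases hb with rfl | rfl <;> rw [hβ₂] <;> norm_num
      have hcompl := bool_card_compl hbool hβ2pm
      have hnegβ : -β₂ = β := by rw [hβ₂, neg_neg]
      rw [hnegβ] at hcompl
      rw [if_pos rfl] at hcount
      have hc1 : 2 * (Nat.card {x : Fin n → Bool // f x = β} : ℝ) =
          2 ^ n + Nat.card {x : Fin n → Bool // restrict f i (!a) x = β} := by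
        exact_mod_cast hcount
      have hc2 : (Nat.card {x : Fin n → Bool // restrict f i (!a) x = β₂} : ℝ) +
          Nat.card {x : Fin n → Bool // restrict f i (!a) x = β} = 2 ^ n := by
        exact_mod_cast hcompl
      simp only [List.length_cons]
      have hq : (-1/2 : ℝ) ^ (L''.length + 1 + 1) =
          (-1/2 : ℝ) ^ (L''.length + 1) * (-1/2) := pow_succ _ _
      rw [hq]
      linear_combination (1/2) * hc1 + (1/2) * hc2 - (1/2) * ihg

lemma influence_head {f : (Fin n → Bool) → ℝ} {i : Fin n} {a : Bool} {β : ℝ} {L}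
    (h : IsNCFwith f ((i, a, β) :: L)) :
    influence f i =
      (Nat.card {x : Fin n → Bool // restrict f i (!a) x ≠ β} : ℝ) / 2 ^ n := by
  cases h with
  | step _ _ _ _ hb _ hrel hcan hrest =>
    have hiff : ∀ x : Fin n → Bool,
        (f x ≠ f (Function.update x i (!(x i)))) ↔ (restrict f i (!a) x ≠ β) := by
      intro x
      by_cases hxa : x i = a
      · rw [hcan x hxa, hxa]
        exact ne_comm
      · have hxna : x i = !a := bool_eq_not hxa
        rw [f_eq_restrict f i a x hxna, hxna, Bool.not_not,
          hcan _ (Function.update_self _ _ _)]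
    rw [influence, Nat.card_congr (Equiv.subtypeEquivRight hiff)]

lemma influence_tail {f : (Fin n → Bool) → ℝ} {i : Fin n} {a : Bool} {b : ℝ} {L}
    (h : IsNCFwith f ((i, a, b) :: L)) {j : Fin n} (hj : j ≠ i) :
    2 * influence f j = influence (restrict f i (!a)) j := by
  cases h with
  | step _ _ _ _ hb _ hrel hcan hrest =>
    have hgup : ∀ (x : Fin n → Bool) (c : Bool),
        restrict f i (!a) (Function.update x i c) = restrict f i (!a) x :=
      fun x c => restrict_update f i (!a) c x
    have hcomm : ∀ (x : Fin n → Bool) (c : Bool),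
        restrict f i (!a) (Function.update (Function.update x i c) j (!(x j))) =
        restrict f i (!a) (Function.update x j (!(x j))) := by
      intro x c
      rw [Function.update_comm (Ne.symm hj), hgup]
    have hiff : ∀ x : Fin n → Bool,
        (f x ≠ f (Function.update x j (!(x j)))) ↔
        (x i = !a ∧ restrict f i (!a) x ≠
          restrict f i (!a) (Function.update x j (!(x j)))) := by
      intro x
      have hxj : (Function.update x j (!(x j))) i = x i :=
        Function.update_of_ne (Ne.symm hj) _ _
      by_cases hxa : x i = a
      · constructor
        · intro hne
          exfalso
          exact hne (by rw [hcan x hxa, hcan _ (by rw [hxj]; exact hxa)])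
        · rintro ⟨hxna, _⟩
          rw [hxa] at hxna
          exact absurd hxna (by cases a <;> simp)
      · have hxna : x i = !a := bool_eq_not hxa
        rw [f_eq_restrict f i a x hxna, f_eq_restrict f i a _ (by rw [hxj]; exact hxna)]
        exact ⟨fun h => ⟨hxna, h⟩, fun h => h.2⟩
    have hp : ∀ (x : Fin n → Bool) (c : Bool),
        (restrict f i (!a) (Function.update x i c) ≠
          restrict f i (!a) (Function.update (Function.update x i c) j
            (!((Function.update x i c) j)))) ↔
        (restrict f i (!a) x ≠ restrict f i (!a) (Function.update x j (!(x j)))) := by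
      intro x c
      rw [hgup x c, Function.update_of_ne hj, hcomm]
    have hhalf := half_card (p := fun x => restrict f i (!a) x ≠
      restrict f i (!a) (Function.update x j (!(x j)))) (i := i) hp (!a)
    rw [influence, influence, Nat.card_congr (Equiv.subtypeEquivRight hiff)]
    have hc : (2 : ℝ) * Nat.card {x : Fin n → Bool // x i = !a ∧ restrict f i (!a) x ≠
        restrict f i (!a) (Function.update x j (!(x j)))} =
        Nat.card {x : Fin n → Bool // restrict f i (!a) x ≠
          restrict f i (!a) (Function.update x j (!(x j)))} := by
      exact_mod_cast hhalf
    rw [← mul_div_assoc, hc]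

lemma influence_eq_zero {f : (Fin n → Bool) → ℝ} {j : Fin n} (hj : ¬ relevant f j) :
    influence f j = 0 := by
  have : IsEmpty {x : Fin n → Bool // f x ≠ f (Function.update x j (!(x j)))} :=
    ⟨fun ⟨x, hx⟩ => hj ⟨x, hx⟩⟩
  rw [influence, Nat.card_of_isEmpty]
  simp

lemma avgSens_const {f : (Fin n → Bool) → ℝ} {b : ℝ} (hc : ∀ x, f x = b) :
    avgSens f = 0 :=
  Finset.sum_eq_zero fun j _ => influence_eq_zero (fun ⟨_, hx⟩ => hx (by rw [hc, hc]))

lemma avgSens_step {f : (Fin n → Bool) → ℝ} {i : Fin n} {a : Bool} {b : ℝ} {L}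
    (h : IsNCFwith f ((i, a, b) :: L)) :
    avgSens f = influence f i + (1/2) * avgSens (restrict f i (!a)) := by
  have hg : ∀ j, j ≠ i → influence f j = (1/2) * influence (restrict f i (!a)) j := by
    intro j hj
    have := influence_tail h hj
    linarith
  rw [avgSens, ← Finset.add_sum_erase _ _ (mem_univ i)]
  have h1 : ∑ j ∈ univ.erase i, influence f j =
      ∑ j ∈ univ.erase i, (1/2) * influence (restrict f i (!a)) j :=
    Finset.sum_congr rfl fun j hj => hg j (Finset.ne_of_mem_erase hj)
  rw [h1, ← Finset.mul_sum]
  have hgi : influence (restrict f i (!a)) i = 0 :=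
    influence_eq_zero (not_relevant_restrict f i (!a))
  rw [avgSens, ← Finset.add_sum_erase _ (fun j => influence (restrict f i (!a)) j)
    (mem_univ i), hgi, zero_add]

lemma avgSens_ncf_aux : ∀ (L : List (Fin n × Bool × ℝ)) (f : (Fin n → Bool) → ℝ) (i : Fin n)
    (a : Bool) (β : ℝ), IsNCFwith f ((i, a, β) :: L) → AltBetas ((i, a, β) :: L) →
    avgSens f = 4/3 - (1/2 : ℝ) ^ (L.length + 1) - (1/3) * (-1/2 : ℝ) ^ (L.length + 1) := by
  intro L
  induction L with
  | nil =>
    intro f i a β h halt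
    have hstep := avgSens_step h
    have hhead := influence_head h
    cases h with
    | step _ _ _ _ hb _ hrel hcan hrest =>
      cases hrest with
      | const _ b hb' hconst =>
        have hne : β ≠ b := ncf_base_ne hrel hcan hconst
        have hall : ∀ x : Fin n → Bool, restrict f i (!a) x ≠ β := fun x => by
          rw [hconst x]; exact Ne.symm hne
        have hfull : Nat.card {x : Fin n → Bool // restrict f i (!a) x ≠ β} = 2 ^ n := by
          rw [Nat.card_congr (Equiv.subtypeUnivEquiv hall), Nat.card_eq_fintype_card]
          simp
        have hP : ((2 : ℝ)) ^ n ≠ 0 := by positivity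
        rw [hstep, hhead, hfull, avgSens_const hconst]
        simp only [List.length_nil, pow_one]
        push_cast
        rw [div_self hP]
        norm_num
  | cons hd L'' ih =>
    intro f i a β h halt
    obtain ⟨i₂, a₂, β₂⟩ := hd
    have hstep := avgSens_step h
    have hhead := influence_head h
    cases h with
    | step _ _ _ _ hb _ hrel hcan hrest =>
      have hβ₂ : β₂ = -β := by simpa using (List.isChain_cons_cons.mp halt).1
      have halt' : AltBetas ((i₂, a₂, β₂) :: L'') := (List.isChain_cons_cons.mp halt).2
      have hcnt := ncf_count_alt L'' (restrict f i (!a)) i₂ a₂ β₂ hrest halt'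
      have ihg := ih (restrict f i (!a)) i₂ a₂ β₂ hrest halt'
      have hbool := ncf_boolean hrest
      have hne' : ∀ x : Fin n → Bool,
          (restrict f i (!a) x ≠ β) ↔ (restrict f i (!a) x = β₂) := by
        intro x
        rcases hbool x with hx | hx <;> rcases hb with rfl | rfl <;>
          rw [hx, hβ₂] <;> norm_num
      rw [hstep, hhead, Nat.card_congr (Equiv.subtypeEquivRight hne'), ihg, hcnt]
      have hP : ((2 : ℝ)) ^ n ≠ 0 := by positivity
      simp only [List.length_cons]
      rw [mul_div_assoc, div_self hP, mul_one,
        pow_succ (1/2 : ℝ) (L''.length + 1), pow_succ (-1/2 : ℝ) (L''.length + 1)]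
      ring

end AuxNCF

/-- An NCF with alternating canalized values attains the upper bound. -/
theorem avgSens_ncf_alternating {n : ℕ} (f : (Fin n → Bool) → ℝ)
    (L : List (Fin n × Bool × ℝ)) (hf : IsNCFwith f L) (hne : L ≠ [])
    (halt : AltBetas L) (k : ℕ) (hk : numRel f = k) :
    avgSens f = 4 / 3 - 1 / 2 ^ k - (1 / 3) * (1 / 2 ^ k) * (-1 : ℝ) ^ k := by
  obtain ⟨⟨i, a, β⟩, L', rfl⟩ := List.exists_cons_of_ne_nil hne
  rw [AuxNCF.ncf_numRel hf, List.length_cons] at hk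
  subst hk
  rw [AuxNCF.avgSens_ncf_aux L' f i a β hf halt, div_pow, div_pow, one_pow]
  ring
end

section
/- If f is a nested canalizing function with k > 1 relevant variables in which all relevant variables are most dominant, then |f̂(S)| = 2^{-(k-1)} for every nonempty S ⊆ rel(f), and |f̂(∅)| = 1 - 2^{-(k-1)}. -/
open Finset

/-!
All relevant variables are canalizing, and canalizing conditions `x_i = a_i`, `x_j = a_j` on
distinct variables can hold at once, so all canalized outputs are one value `B`. Hence `f = B` off
the subcube `C` on which every relevant variable takes its non-canalizing value, and `f = -B` on
`C`, as `f` is not constant. So `f = B - 2B·1_C`, and the Fourier coefficients of the indicator of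
a subcube of codimension `k` are `±2^{-k}` on subsets of its fixed coordinates and `0` elsewhere.
-/

def Canalizes {n : ℕ} (f : (Fin n → Bool) → ℝ) (i : Fin n) (a : Bool) (b : ℝ) : Prop :=
  ∀ x, x i = a → f x = b

def subcubeIndicator {n : ℕ} (R : Finset (Fin n)) (c : Fin n → Bool) (x : Fin n → Bool) : ℝ :=
  if ∀ i ∈ R, x i = c i then 1 else 0

section Fourier

variable {n : ℕ}

theorem abs_chi (S : Finset (Fin n)) (x : Fin n → Bool) : |chi S x| = 1 := by
  rw [chi, abs_prod]
  exact prod_eq_one fun i _ => by cases x i <;> simp [bsign]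

theorem fhat_sub (g h : (Fin n → Bool) → ℝ) (S : Finset (Fin n)) :
    fhat (fun x => g x - h x) S = fhat g S - fhat h S := by
  simp only [fhat, sub_mul, sum_sub_distrib, sub_div]

theorem fhat_const_mul (α : ℝ) (g : (Fin n → Bool) → ℝ) (S : Finset (Fin n)) :
    fhat (fun x => α * g x) S = α * fhat g S := by
  simp only [fhat, mul_assoc, ← mul_sum, mul_div_assoc]

theorem subcubeIndicator_mul_chi (R S : Finset (Fin n)) (c x : Fin n → Bool) :
    subcubeIndicator R c x * chi S x =
      ∏ i, (if i ∈ R then (if x i = c i then 1 else 0) else 1) *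
        (if i ∈ S then bsign (x i) else 1) := by
  rw [prod_mul_distrib, prod_ite_mem, prod_ite_mem, univ_inter, univ_inter, prod_boole, chi,
    subcubeIndicator]
  congr

theorem sum_bool_subcube_factor (R S : Finset (Fin n)) (c : Fin n → Bool) (i : Fin n) :
    ∑ v : Bool, (if i ∈ R then (if v = c i then 1 else 0) else 1) *
        (if i ∈ S then bsign v else 1) =
      if i ∈ R then (if i ∈ S then bsign (c i) else 1) else (if i ∈ S then 0 else 2) := by
  rw [Fintype.sum_bool]
  by_cases hR : i ∈ R <;> by_cases hS : i ∈ S <;> cases c i <;> norm_num [hR, hS, bsign]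

theorem fhat_subcubeIndicator (R S : Finset (Fin n)) (c : Fin n → Bool) :
    fhat (subcubeIndicator R c) S = if S ⊆ R then chi S c / 2 ^ R.card else 0 := by
  have hsum : ∑ x, subcubeIndicator R c x * chi S x =
      ∏ i, if i ∈ R then (if i ∈ S then bsign (c i) else 1) else (if i ∈ S then 0 else 2) := by
    simp_rw [subcubeIndicator_mul_chi]
    rw [← Fintype.prod_sum fun i v => (if i ∈ R then (if v = c i then (1 : ℝ) else 0) else 1) *
      (if i ∈ S then bsign v else 1)]
    exact prod_congr rfl fun i _ => sum_bool_subcube_factor R S c i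
  rw [fhat, hsum]
  split_ifs with hSR
  · have hin : ∏ i ∈ R, (if i ∈ R then (if i ∈ S then bsign (c i) else 1)
        else (if i ∈ S then 0 else 2)) = chi S c := by
      rw [prod_congr rfl fun i hi => if_pos hi, prod_ite_mem, inter_eq_right.mpr hSR, chi]
    have hout : ∏ i ∈ Rᶜ, (if i ∈ R then (if i ∈ S then bsign (c i) else 1)
        else (if i ∈ S then 0 else 2)) = (2 : ℝ) ^ Rᶜ.card := by
      rw [prod_congr rfl fun i hi => by
        rw [if_neg (mem_compl.mp hi), if_neg fun hiS => mem_compl.mp hi (hSR hiS)], prod_const]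
    have hcube : (2 : ℝ) ^ n = 2 ^ R.card * 2 ^ Rᶜ.card := by
      rw [← pow_add, card_add_card_compl, Fintype.card_fin]
    rw [← prod_mul_prod_compl R, hin, hout, hcube]
    field_simp
  · obtain ⟨i, hiS, hiR⟩ := not_subset.mp hSR
    rw [prod_eq_zero (mem_univ i) (by simp [hiR, hiS]), zero_div]

theorem fhat_const (α : ℝ) (S : Finset (Fin n)) :
    fhat (fun _ => α) S = if S = ∅ then α else 0 := by
  have hcube : subcubeIndicator (∅ : Finset (Fin n)) (fun _ => true) = fun _ => (1 : ℝ) :=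
    funext fun x => if_pos fun i hi => absurd hi (notMem_empty i)
  have hone : fhat (fun _ => 1) S = if S = ∅ then 1 else 0 := by
    simpa [hcube, chi, bsign] using fhat_subcubeIndicator ∅ S (fun _ => true)
  simpa [hone] using fhat_const_mul α (fun _ => 1) S

end Fourier

section Structure

open scoped Classical

variable {n : ℕ} {f : (Fin n → Bool) → ℝ}

theorem IsNCFwith.isBoolean {L : List (Fin n × Bool × ℝ)} (h : IsNCFwith f L) : IsBoolean f := by
  induction h with
  | const f b hb h => exact fun x => h x ▸ hb
  | step f i a b hb L hrel hcan hrest ih =>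
    intro x
    by_cases hx : x i = a
    · exact hcan x hx ▸ hb
    · have := ih x
      rwa [_root_.restrict, ← Bool.eq_not_iff.mpr hx, Function.update_eq_self] at this

theorem MostDominant.isBoolean {i : Fin n} (h : MostDominant f i) : IsBoolean f := by
  obtain ⟨a, b, L, hL⟩ := h
  exact hL.isBoolean

theorem MostDominant.exists_canalizes {i : Fin n} (h : MostDominant f i) :
    ∃ a b, Canalizes f i a b := by
  obtain ⟨a, b, L, hL⟩ := h
  cases hL with
  | step _ _ _ _ _ _ _ hcan _ => exact ⟨a, b, hcan⟩

theorem Canalizes.eq_one_or_eq_neg_one {i : Fin n} {a : Bool} {b : ℝ} (h : Canalizes f i a b)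
    (hf : IsBoolean f) : b = 1 ∨ b = -1 :=
  h (fun _ => a) rfl ▸ hf _

theorem Canalizes.output_eq_of_ne {i j : Fin n} {a a' : Bool} {b b' : ℝ} (hij : i ≠ j)
    (hi : Canalizes f i a b) (hj : Canalizes f j a' b') : b = b' := by
  let x : Fin n → Bool := Function.update (fun _ => a') i a
  rw [← hi x (Function.update_self ..), ← hj x (Function.update_of_ne hij.symm ..)]

theorem exists_canalizes_common_output (p : Fin n → Prop)
    (h : ∀ i, p i → ∃ a b, Canalizes f i a b) :
    ∃ (a : Fin n → Bool) (B : ℝ), ∀ i, p i → Canalizes f i (a i) B := by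
  have h' : ∀ i, ∃ a b, p i → Canalizes f i a b := fun i => by
    by_cases hi : p i
    · obtain ⟨a, b, hab⟩ := h i hi
      exact ⟨a, b, fun _ => hab⟩
    · exact ⟨true, 0, fun h => absurd h hi⟩
  choose a b hab using h'
  by_cases hp : ∃ i₀, p i₀
  · obtain ⟨i₀, hi₀⟩ := hp
    refine ⟨a, b i₀, fun i hi => ?_⟩
    rcases eq_or_ne i i₀ with rfl | hne
    · exact hab i hi
    · exact (hab i hi).output_eq_of_ne hne (hab i₀ hi₀) ▸ hab i hi
  · push Not at hp
    exact ⟨a, 0, fun i hi => absurd hi (hp i)⟩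

theorem apply_update_of_not_relevant {i : Fin n} (hi : ¬ relevant f i) (x : Fin n → Bool)
    (v : Bool) : f (Function.update x i v) = f x := by
  by_cases hv : v = x i
  · rw [hv, Function.update_eq_self]
  · rw [Bool.eq_not_iff.mpr hv]
    by_contra h
    exact hi ⟨x, Ne.symm h⟩

theorem eq_of_forall_relevant_eq {x y : Fin n → Bool} (h : ∀ i, relevant f i → x i = y i) :
    f x = f y := by
  suffices ∀ s : Finset (Fin n), f x = f (s.piecewise y x) by simpa using this univ
  intro s
  induction s using Finset.induction_on with
  | empty => simp
  | insert j s hj ih =>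
    rw [ih, piecewise_insert]
    by_cases hjrel : relevant f j
    · rw [Function.update_eq_self_iff.mpr
        ((piecewise_eq_of_notMem _ _ _ hj).trans (h j hjrel)).symm]
    · exact (apply_update_of_not_relevant hjrel _ _).symm

theorem apply_eq_ite_of_forall_relevant_canalizes {a : Fin n → Bool} {B : ℝ}
    (hcan : ∀ i, relevant f i → Canalizes f i (a i) B) (x : Fin n → Bool) :
    f x = if ∀ i, relevant f i → x i = !a i then f (fun i => !a i) else B := by
  split_ifs with hx
  · exact eq_of_forall_relevant_eq hx
  · push Not at hx
    obtain ⟨i, hi, hxi⟩ := hx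
    exact hcan i hi x (by simpa using hxi)

theorem apply_not_eq_neg_of_forall_relevant_canalizes {a : Fin n → Bool} {B : ℝ} {i₀ : Fin n}
    (hf : IsBoolean f) (hi₀ : relevant f i₀)
    (hcan : ∀ i, relevant f i → Canalizes f i (a i) B) : f (fun i => !a i) = -B := by
  have hne : f (fun i => !a i) ≠ B := by
    intro h
    obtain ⟨z, hz⟩ := hi₀
    rw [apply_eq_ite_of_forall_relevant_canalizes hcan z, h, ite_self,
      apply_eq_ite_of_forall_relevant_canalizes hcan, h, ite_self] at hz
    exact hz rfl
  rcases hf (fun i => !a i) with h | h <;>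
    rcases (hcan i₀ hi₀).eq_one_or_eq_neg_one hf with hB | hB <;>
    simp_all

theorem eq_sub_subcubeIndicator_of_forall_relevant_canalizes {a : Fin n → Bool} {B : ℝ}
    {i₀ : Fin n} (hf : IsBoolean f) (hi₀ : relevant f i₀)
    (hcan : ∀ i, relevant f i → Canalizes f i (a i) B) :
    f = fun x => B - 2 * B * subcubeIndicator (univ.filter (relevant f)) (fun i => !a i) x := by
  funext x
  rw [apply_eq_ite_of_forall_relevant_canalizes hcan x,
    apply_not_eq_neg_of_forall_relevant_canalizes hf hi₀ hcan, subcubeIndicator]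
  simp only [mem_filter, mem_univ, true_and]
  split_ifs <;> ring

theorem numRel_eq_card_filter : numRel f = (univ.filter (relevant f)).card := by
  rw [numRel, Nat.card_eq_fintype_card, Fintype.card_subtype]

theorem exists_relevant_of_numRel_pos (h : 0 < numRel f) : ∃ i, relevant f i := by
  obtain ⟨⟨i, hi⟩⟩ := (Nat.card_pos_iff.mp h).1
  exact ⟨i, hi⟩

theorem fhat_eq_of_forall_relevant_canalizes {a : Fin n → Bool} {B : ℝ} {i₀ : Fin n}
    (hf : IsBoolean f) (hi₀ : relevant f i₀)
    (hcan : ∀ i, relevant f i → Canalizes f i (a i) B) (S : Finset (Fin n)) :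
    fhat f S = (if S = ∅ then B else 0) - 2 * B *
      (if ∀ i ∈ S, relevant f i then chi S (fun i => !a i) / 2 ^ numRel f else 0) := by
  conv_lhs => rw [eq_sub_subcubeIndicator_of_forall_relevant_canalizes hf hi₀ hcan]
  rw [fhat_sub, fhat_const, fhat_const_mul, fhat_subcubeIndicator, ← numRel_eq_card_filter]
  simp only [subset_iff, mem_filter, mem_univ, true_and]

end Structure

theorem fhat_all_most_dominant_general {n : ℕ} (f : (Fin n → Bool) → ℝ)
    (hdom : ∀ i, relevant f i → MostDominant f i)
    (k : ℕ) (hk : numRel f = k) (h1 : 1 < k) :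
    (∀ S : Finset (Fin n), S ≠ ∅ → (∀ i ∈ S, relevant f i) →
      |fhat f S| = 1 / 2 ^ (k - 1)) ∧
    |fhat f ∅| = 1 - 1 / 2 ^ (k - 1) := by
  obtain ⟨i₀, hi₀⟩ := exists_relevant_of_numRel_pos (f := f) (by omega)
  have hbool := (hdom i₀ hi₀).isBoolean
  obtain ⟨a, B, hcan⟩ :=
    exists_canalizes_common_output _ fun i hi => (hdom i hi).exists_canalizes
  have hB : |B| = 1 := by
    rcases (hcan i₀ hi₀).eq_one_or_eq_neg_one hbool with h | h <;> simp [h]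
  have hfhat := fhat_eq_of_forall_relevant_canalizes hbool hi₀ hcan
  obtain ⟨m, rfl⟩ : ∃ m, k = m + 1 := ⟨k - 1, by omega⟩
  simp only [hk, Nat.add_sub_cancel] at hfhat ⊢
  constructor
  · intro S hS hSrel
    rw [hfhat, if_neg hS, if_pos hSrel, zero_sub, abs_neg, abs_mul, abs_mul, abs_div, hB,
      abs_chi, abs_two, abs_of_pos (by positivity), pow_succ]
    field_simp
  · have hle : 1 / (2 : ℝ) ^ m ≤ 1 := (div_le_one (by positivity)).mpr (one_le_pow₀ one_le_two)
    have hfactor : B - 2 * B * (1 / 2 ^ (m + 1)) = B * (1 - 1 / 2 ^ m) := by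
      rw [pow_succ]
      field_simp
    rw [hfhat, if_pos rfl, if_pos (by simp), chi, prod_empty, hfactor, abs_mul, hB, one_mul,
      abs_of_nonneg (sub_nonneg.mpr hle)]

/-- For an NCF with `k > 1` relevant variables, all most dominant, the Fourier
coefficients on nonempty sets of relevant variables all have absolute value
`2^{-(k-1)}`, and `|f̂(∅)| = 1 - 2^{-(k-1)}`. -/
theorem fhat_all_most_dominant {n : ℕ} (f : (Fin n → Bool) → ℝ)
    (hf : IsNCF f) (hdom : ∀ i, relevant f i → MostDominant f i)
    (k : ℕ) (hk : numRel f = k) (h1 : 1 < k) :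
    (∀ S : Finset (Fin n), S ≠ ∅ → (∀ i ∈ S, relevant f i) →
      |fhat f S| = 1 / 2 ^ (k - 1)) ∧
    |fhat f ∅| = 1 - 1 / 2 ^ (k - 1) :=
  fhat_all_most_dominant_general f hdom k hk h1
end
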